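/- Let e be a nonzero integer and let N_e be the group with presentation ⟨a, b, k | [a,k] = 1, [b,k] = 1, [a,b] = k^e⟩. Then the central cyclic subgroup ⟨k⟩ is quadratically distorted in N_e, i.e. the distortion function Δ_{⟨k⟩}^{N_e} is equivalent to n ↦ n². -/

import Mathlib

/-- The word length of `g` with respect to a generating set `S`: the least `n ≥ 0`
such that `g` is a product of `n` elements of `S ∪ S⁻¹`. -/
noncomputable def wordLength {G : Type*} [Group G] (S : Set G) (g : G) : ℕ :=
  sInf {n : ℕ | ∃ l : List G, (∀ x ∈ l, x ∈ S ∨ x⁻¹ ∈ S) ∧ l.length = n ∧ l.prod = g}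


/-- The distortion function of the subgroup generated by `A` inside the group
generated by `S`: `n ↦ max { |g|_A : g ∈ ⟨A⟩, |g|_S ≤ n }`. -/
noncomputable def distortion {G : Type*} [Group G] (S A : Set G) (n : ℕ) : ℕ :=
  sSup {m : ℕ | ∃ g ∈ Subgroup.closure A, wordLength A g = m ∧ wordLength S g ≤ n}

/-- `f` is dominated by `g`: there are positive constants `A, B, C, D, E` with
`f(x) ≤ A·g(Bx + C) + Dx + E` for all `x`. -/
def DominatedN (f g : ℕ → ℕ) : Prop :=
  ∃ A B C D E : ℕ, 0 < A ∧ 0 < B ∧ 0 < C ∧ 0 < D ∧ 0 < E ∧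
    ∀ n, f n ≤ A * g (B * n + C) + D * n + E

/-- Equivalence of nondecreasing functions: mutual domination. -/
def EquivN (f g : ℕ → ℕ) : Prop := DominatedN f g ∧ DominatedN g f


open scoped commutatorElement in
/-- The relations of the presentation
`⟨a, b, k | [a,k] = 1, [b,k] = 1, [a,b] = kᵉ⟩`, where `a, b, k` are the generators
indexed by `0, 1, 2 : Fin 3`. -/
def nilRels (e : ℤ) : Set (FreeGroup (Fin 3)) :=
  {⁅FreeGroup.of (0 : Fin 3), FreeGroup.of (2 : Fin 3)⁆, ⁅FreeGroup.of (1 : Fin 3), FreeGroup.of (2 : Fin 3)⁆,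
   ⁅FreeGroup.of (0 : Fin 3), FreeGroup.of (1 : Fin 3)⁆ * (FreeGroup.of (2 : Fin 3)) ^ (-e)}

/-- The Nil 3-manifold group `N_e = ⟨a, b, k | [a,k] = 1, [b,k] = 1, [a,b] = kᵉ⟩`,
the fundamental group of the orientable circle bundle over the torus with Euler
number `e`. -/
abbrev NilGroup (e : ℤ) := PresentedGroup (nilRels e)

/-- The generator `a` of `N_e`. -/
def nilA (e : ℤ) : NilGroup e := PresentedGroup.of 0

/-- The generator `b` of `N_e`. -/
def nilB (e : ℤ) : NilGroup e := PresentedGroup.of 1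

/-- The central fiber generator `k` of `N_e`. -/
def nilK (e : ℤ) : NilGroup e := PresentedGroup.of 2

/-!
Map `N_e` to the model `ℤ³` with `(x, y, z) * (x', y', z') = (x + x', y + y', z + z' - e y x')`,
where `a, b, k ↦ (1,0,0), (0,1,0), (0,0,1)` and the `z`-coordinate of `kᵗ` is `t`. A product of
`n` letters with bounded coordinates has `|z| = O(n²)`, so an element `kᵗ` of `S`-length `n` has
`|t| = O(n²)`, hence `B`-length `O(n²)`. Conversely `[aⁿ, bⁿ] = k^(e n²)` has `S`-length `O(n)`,
while a `B`-word of length `m` evaluates to some `kᵗ` with `|t| = O(m)`; as `k` has infinite order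
(its image in the model does), `m` is at least of order `|e| n² ≥ n²`.
-/

open scoped commutatorElement

section WordLength

variable {G : Type*} [Group G] {S : Set G} {g h : G}

theorem wordLength_list_prod_le {l : List G} (hl : ∀ x ∈ l, x ∈ S ∨ x⁻¹ ∈ S) :
    wordLength S l.prod ≤ l.length :=
  Nat.sInf_le ⟨l, hl, rfl, rfl⟩

theorem wordLength_one : wordLength S (1 : G) = 0 :=
  Nat.le_zero.1 (wordLength_list_prod_le (l := []) (by simp))

theorem exists_list_length_eq_wordLength (hg : g ∈ Subgroup.closure S) :
    ∃ l : List G, (∀ x ∈ l, x ∈ S ∨ x⁻¹ ∈ S) ∧ l.length = wordLength S g ∧ l.prod = g := by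
  rw [← Subgroup.mem_toSubmonoid, Subgroup.closure_toSubmonoid] at hg
  obtain ⟨l, hl, rfl⟩ := Submonoid.exists_list_of_mem_closure hg
  exact Nat.sInf_mem (s := {n | ∃ l' : List G, (∀ x ∈ l', x ∈ S ∨ x⁻¹ ∈ S) ∧ l'.length = n ∧
    l'.prod = l.prod}) ⟨_, l, hl, rfl, rfl⟩

theorem wordLength_mul_le (hg : g ∈ Subgroup.closure S) (hh : h ∈ Subgroup.closure S) :
    wordLength S (g * h) ≤ wordLength S g + wordLength S h := by
  obtain ⟨l, hl, hlen, rfl⟩ := exists_list_length_eq_wordLength hg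
  obtain ⟨l', hl', hlen', rfl⟩ := exists_list_length_eq_wordLength hh
  rw [← hlen, ← hlen', ← List.length_append, ← List.prod_append]
  exact wordLength_list_prod_le fun x hx => (List.mem_append.1 hx).elim (hl x) (hl' x)

theorem wordLength_inv_le (hg : g ∈ Subgroup.closure S) : wordLength S g⁻¹ ≤ wordLength S g := by
  obtain ⟨l, hl, hlen, rfl⟩ := exists_list_length_eq_wordLength hg
  rw [← hlen, List.prod_inv_reverse]
  refine (wordLength_list_prod_le fun x hx => ?_).trans_eq (by simp)
  obtain ⟨y, hy, rfl⟩ := List.mem_map.1 (List.mem_reverse.1 hx)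
  simpa [or_comm] using hl y hy

theorem wordLength_commutatorElement_le (hg : g ∈ Subgroup.closure S)
    (hh : h ∈ Subgroup.closure S) :
    wordLength S ⁅g, h⁆ ≤ 2 * (wordLength S g + wordLength S h) := by
  have hg' := Subgroup.inv_mem _ hg
  rw [commutatorElement_def]
  linarith [wordLength_mul_le (mul_mem (mul_mem hg hh) hg') (Subgroup.inv_mem _ hh),
    wordLength_mul_le (mul_mem hg hh) hg', wordLength_mul_le hg hh, wordLength_inv_le hg,
    wordLength_inv_le hh]

theorem wordLength_pow_le (hg : g ∈ Subgroup.closure S) (n : ℕ) :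
    wordLength S (g ^ n) ≤ n * wordLength S g := by
  induction n with
  | zero => simp [wordLength_one]
  | succ n ih =>
    rw [pow_succ, add_one_mul]
    exact (wordLength_mul_le (pow_mem hg n) hg).trans (by gcongr)

theorem wordLength_zpow_le (hg : g ∈ Subgroup.closure S) (t : ℤ) :
    wordLength S (g ^ t) ≤ t.natAbs * wordLength S g := by
  obtain ⟨n, rfl | rfl⟩ := Int.eq_nat_or_neg t
  · simpa using wordLength_pow_le hg n
  · rw [zpow_neg, zpow_natCast, Int.natAbs_neg, Int.natAbs_natCast]
    exact (wordLength_inv_le (pow_mem hg n)).trans (wordLength_pow_le hg n)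

theorem exists_zpow_eq_natAbs_le_mul_wordLength {k : G} {M : ℕ}
    (hS : ∀ s ∈ S, ∃ t : ℤ, s = k ^ t ∧ t.natAbs ≤ M) (hg : g ∈ Subgroup.closure S) :
    ∃ t : ℤ, g = k ^ t ∧ t.natAbs ≤ M * wordLength S g := by
  obtain ⟨l, hl, hlen, rfl⟩ := exists_list_length_eq_wordLength hg
  rw [← hlen]
  clear hlen hg
  induction l with
  | nil => exact ⟨0, by simp⟩
  | cons x l ih =>
    obtain ⟨t, ht, htM⟩ := ih fun y hy => hl y (List.mem_cons_of_mem x hy)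
    obtain ⟨s, hs, hsM⟩ : ∃ s : ℤ, x = k ^ s ∧ s.natAbs ≤ M := by
      rcases hl x List.mem_cons_self with hx | hx
      · exact hS x hx
      · obtain ⟨s, hs, hsM⟩ := hS _ hx
        exact ⟨-s, by rw [zpow_neg, ← hs, inv_inv], by rwa [Int.natAbs_neg]⟩
    refine ⟨s + t, by rw [List.prod_cons, ht, hs, zpow_add], ?_⟩
    rw [List.length_cons, mul_add_one]
    have := Int.natAbs_add_le s t
    omega

theorem Finset.exists_zpow_eq_natAbs_le {k : G} (B : Finset G)
    (hB : (B : Set G) ⊆ Subgroup.zpowers k) :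
    ∃ M : ℕ, ∀ b ∈ B, ∃ t : ℤ, b = k ^ t ∧ t.natAbs ≤ M := by
  classical
  induction B using Finset.induction_on with
  | empty => exact ⟨0, by simp⟩
  | insert b B _ ih =>
    rw [Finset.coe_insert, Set.insert_subset_iff] at hB
    obtain ⟨M, hM⟩ := ih hB.2
    obtain ⟨s, rfl⟩ := Subgroup.mem_zpowers_iff.1 hB.1
    refine ⟨max s.natAbs M, fun c hc => ?_⟩
    rcases Finset.mem_insert.1 hc with rfl | hc
    · exact ⟨s, rfl, le_max_left _ _⟩
    · obtain ⟨t, rfl, ht⟩ := hM c hc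
      exact ⟨t, rfl, ht.trans (le_max_right _ _)⟩

end WordLength

section Distortion

variable {G : Type*} [Group G] {S A : Set G} {n m : ℕ}

theorem distortion_le (h : ∀ g ∈ Subgroup.closure A, wordLength S g ≤ n → wordLength A g ≤ m) :
    distortion S A n ≤ m :=
  csSup_le ⟨0, 1, one_mem _, wordLength_one, by simp [wordLength_one]⟩ fun _ ⟨g, hg, hgA, hgS⟩ =>
    hgA ▸ h g hg hgS

theorem le_distortion (h : ∀ g ∈ Subgroup.closure A, wordLength S g ≤ n → wordLength A g ≤ m)
    {g : G} (hg : g ∈ Subgroup.closure A) (hgS : wordLength S g ≤ n) :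
    wordLength A g ≤ distortion S A n :=
  le_csSup ⟨m, fun _ ⟨g, hg, hgA, hgS⟩ => hgA ▸ h g hg hgS⟩ ⟨g, hg, rfl, hgS⟩

end Distortion

theorem DominatedN.of_le {f g : ℕ → ℕ} {A B C : ℕ} (hB : 0 < B) (hC : 0 < C)
    (h : ∀ n, f n ≤ A * g (B * n + C)) : DominatedN f g :=
  ⟨A + 1, B, C, 1, 1, A.succ_pos, hB, hC, one_pos, one_pos, fun n =>
    (h n).trans (by nlinarith [Nat.zero_le (g (B * n + C))])⟩

theorem commutatorElement_pow_pow {G : Type*} [Group G] {a b : G} (ha : Commute a ⁅a, b⁆)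
    (hb : Commute b ⁅a, b⁆) (m n : ℕ) : ⁅a ^ m, b ^ n⁆ = ⁅a, b⁆ ^ (m * n) := by
  set c := ⁅a, b⁆
  have hab : SemiconjBy a b (c * b) := by
    simp only [SemiconjBy, c, commutatorElement_def, inv_mul_cancel_right]
  have habn : SemiconjBy a (b ^ n) (c ^ n * b ^ n) := hb.symm.mul_pow n ▸ hab.pow_right n
  have hamn : SemiconjBy (a ^ m) (b ^ n) (c ^ (m * n) * b ^ n) := by
    induction m with
    | zero => simp
    | succ m ih =>
      rw [pow_succ', add_one_mul, pow_add, mul_assoc]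
      exact (SemiconjBy.mul_right (ha.pow_right (m * n)) habn).mul_left ih
  rw [commutatorElement_def, hamn.eq]
  group

@[ext] structure NilModel (e : ℤ) where
  x : ℤ
  y : ℤ
  z : ℤ

namespace NilModel

variable {e : ℤ}

instance : Mul (NilModel e) := ⟨fun p q => ⟨p.x + q.x, p.y + q.y, p.z + q.z - e * p.y * q.x⟩⟩
instance : One (NilModel e) := ⟨⟨0, 0, 0⟩⟩
instance : Inv (NilModel e) := ⟨fun p => ⟨-p.x, -p.y, -p.z - e * p.x * p.y⟩⟩

@[simp] theorem mul_x (p q : NilModel e) : (p * q).x = p.x + q.x := rfl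
@[simp] theorem mul_y (p q : NilModel e) : (p * q).y = p.y + q.y := rfl
@[simp] theorem mul_z (p q : NilModel e) : (p * q).z = p.z + q.z - e * p.y * q.x := rfl
@[simp] theorem one_x : (1 : NilModel e).x = 0 := rfl
@[simp] theorem one_y : (1 : NilModel e).y = 0 := rfl
@[simp] theorem one_z : (1 : NilModel e).z = 0 := rfl
@[simp] theorem inv_x (p : NilModel e) : p⁻¹.x = -p.x := rfl
@[simp] theorem inv_y (p : NilModel e) : p⁻¹.y = -p.y := rfl
@[simp] theorem inv_z (p : NilModel e) : p⁻¹.z = -p.z - e * p.x * p.y := rfl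

instance : Group (NilModel e) where
  mul_assoc p q r := by ext <;> simp <;> ring
  one_mul p := by ext <;> simp
  mul_one p := by ext <;> simp
  inv_mul_cancel p := by ext <;> simp; ring

theorem mk_zero_zero_one_zpow (t : ℤ) : (⟨0, 0, 1⟩ : NilModel e) ^ t = ⟨0, 0, t⟩ := by
  induction t using Int.induction_on with
  | zero => rfl
  | succ t ih => rw [zpow_add_one, ih]; ext <;> simp
  | pred t ih => rw [zpow_sub_one, ih]; ext <;> simp; ring

theorem abs_list_prod_le {M : ℤ} {l : List (NilModel e)}
    (hl : ∀ p ∈ l, |p.x| ≤ M ∧ |p.y| ≤ M ∧ |p.z| ≤ M) :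
    |l.prod.x| ≤ M * l.length ∧ |l.prod.y| ≤ M * l.length ∧
      |l.prod.z| ≤ (M + |e| * M ^ 2) * l.length ^ 2 := by
  induction l with
  | nil => simp
  | cons p l ih =>
    obtain ⟨hpx, hpy, hpz⟩ := hl p List.mem_cons_self
    obtain ⟨hx, hy, hz⟩ := ih fun q hq => hl q (List.mem_cons_of_mem p hq)
    have hM : 0 ≤ M := (abs_nonneg _).trans hpx
    have hxy : |e * p.y * l.prod.x| ≤ |e| * M * (M * l.length) := by
      rw [abs_mul, abs_mul]; gcongr
    simp only [List.prod_cons, List.length_cons, mul_x, mul_y, mul_z, Nat.cast_succ]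
    refine ⟨(abs_add_le _ _).trans (by linarith), (abs_add_le _ _).trans (by linarith), ?_⟩
    calc |p.z + l.prod.z - e * p.y * l.prod.x|
        ≤ |p.z| + |l.prod.z| + |e * p.y * l.prod.x| := (abs_sub _ _).trans
          (add_le_add_left (abs_add_le _ _) _)
      _ ≤ (M + |e| * M ^ 2) * (l.length + 1) ^ 2 := by
        have hL : (0 : ℤ) ≤ l.length := Nat.cast_nonneg _
        have heM : 0 ≤ |e| * M ^ 2 := by positivity
        nlinarith [mul_nonneg heM hL, mul_nonneg hM hL]

end NilModel

namespace NilGroup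

variable {e : ℤ}

theorem commute_nilA_nilK : Commute (nilA e) (nilK e) := by
  have := PresentedGroup.one_of_mem (rels := nilRels e) (Set.mem_insert _ _)
  rwa [map_commutatorElement, commutatorElement_eq_one_iff_commute] at this

theorem commute_nilB_nilK : Commute (nilB e) (nilK e) := by
  have := PresentedGroup.one_of_mem (rels := nilRels e)
    (Set.mem_insert_of_mem _ (Set.mem_insert _ _))
  rwa [map_commutatorElement, commutatorElement_eq_one_iff_commute] at this

theorem commutatorElement_nilA_nilB : ⁅nilA e, nilB e⁆ = nilK e ^ e := by
  have := PresentedGroup.one_of_mem (rels := nilRels e)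
    (Set.mem_insert_of_mem _ (Set.mem_insert_of_mem _ rfl))
  rwa [map_mul, map_commutatorElement, map_zpow, mul_eq_one_iff_eq_inv, ← zpow_neg, neg_neg] at this

theorem commutatorElement_nilA_pow_nilB_pow (n : ℕ) :
    ⁅nilA e ^ n, nilB e ^ n⁆ = nilK e ^ (e * n * n) := by
  rw [commutatorElement_pow_pow, commutatorElement_nilA_nilB, ← zpow_natCast, ← zpow_mul,
    Nat.cast_mul, mul_assoc]
  · rw [commutatorElement_nilA_nilB]; exact commute_nilA_nilK.zpow_right e
  · rw [commutatorElement_nilA_nilB]; exact commute_nilB_nilK.zpow_right e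

theorem lift_eq_one_of_mem_nilRels : ∀ r ∈ nilRels e,
    FreeGroup.lift ![(⟨1, 0, 0⟩ : NilModel e), ⟨0, 1, 0⟩, ⟨0, 0, 1⟩] r = 1 := by
  rintro r (rfl | rfl | rfl) <;>
    ext <;> simp [commutatorElement_def, NilModel.mk_zero_zero_one_zpow]

noncomputable def toModel (e : ℤ) : NilGroup e →* NilModel e :=
  PresentedGroup.toGroup lift_eq_one_of_mem_nilRels

theorem toModel_nilK_zpow (t : ℤ) : toModel e (nilK e ^ t) = ⟨0, 0, t⟩ := by
  rw [map_zpow, nilK, toModel, PresentedGroup.toGroup.of]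
  exact NilModel.mk_zero_zero_one_zpow t

variable {S B : Finset (NilGroup e)}

open Pointwise in
theorem exists_abs_toModel_z_le (hS : Subgroup.closure (S : Set (NilGroup e)) = ⊤) :
    ∃ K : ℕ, ∀ g, |(toModel e g).z| ≤ K * wordLength (S : Set (NilGroup e)) g ^ 2 := by
  let size (g : NilGroup e) : ℤ :=
    max |(toModel e g).x| (max |(toModel e g).y| |(toModel e g).z|)
  obtain ⟨M, hM⟩ := ((S.finite_toSet.union S.finite_toSet.inv).image size).bddAbove
  refine ⟨(M + |e| * M ^ 2).toNat, fun g => ?_⟩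
  obtain ⟨l, hl, hlen, rfl⟩ := exists_list_length_eq_wordLength (hS ▸ Subgroup.mem_top g)
  have hletters : ∀ p ∈ l.map (toModel e), |p.x| ≤ M ∧ |p.y| ≤ M ∧ |p.z| ≤ M := by
    simp only [List.mem_map]
    rintro _ ⟨s, hs, rfl⟩
    simpa [size] using hM ⟨s, hl s hs, rfl⟩
  have hz := (NilModel.abs_list_prod_le hletters).2.2
  rw [← map_list_prod, List.length_map, hlen] at hz
  exact hz.trans (by gcongr; exact Int.self_le_toNat _)

theorem exists_wordLength_le_mul_sq (hS : Subgroup.closure (S : Set (NilGroup e)) = ⊤)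
    (hB : Subgroup.closure (B : Set (NilGroup e)) = Subgroup.zpowers (nilK e)) :
    ∃ C : ℕ, ∀ g ∈ Subgroup.closure (B : Set (NilGroup e)),
      wordLength (B : Set (NilGroup e)) g ≤ C * wordLength (S : Set (NilGroup e)) g ^ 2 := by
  obtain ⟨K, hK⟩ := exists_abs_toModel_z_le hS
  have hk : nilK e ∈ Subgroup.closure (B : Set (NilGroup e)) := hB ▸ Subgroup.mem_zpowers _
  refine ⟨K * wordLength (B : Set (NilGroup e)) (nilK e), fun g hg => ?_⟩
  obtain ⟨t, rfl⟩ := Subgroup.mem_zpowers_iff.1 (hB ▸ hg)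
  have ht : t.natAbs ≤ K * wordLength (S : Set (NilGroup e)) (nilK e ^ t) ^ 2 := by
    have := hK (nilK e ^ t)
    rw [toModel_nilK_zpow, Int.abs_eq_natAbs] at this
    exact_mod_cast this
  calc wordLength (B : Set (NilGroup e)) (nilK e ^ t)
      ≤ t.natAbs * wordLength (B : Set (NilGroup e)) (nilK e) := wordLength_zpow_le hk t
    _ ≤ _ := by rw [mul_right_comm]; gcongr

theorem exists_sq_le_mul_wordLength_nilK_zpow (he : e ≠ 0)
    (hB : Subgroup.closure (B : Set (NilGroup e)) = Subgroup.zpowers (nilK e)) :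
    ∃ M : ℕ, ∀ n : ℕ, n ^ 2 ≤ M * wordLength (B : Set (NilGroup e)) (nilK e ^ (e * n * n)) := by
  obtain ⟨M, hM⟩ := B.exists_zpow_eq_natAbs_le (hB ▸ Subgroup.subset_closure)
  refine ⟨M, fun n => ?_⟩
  obtain ⟨t, ht, htM⟩ := exists_zpow_eq_natAbs_le_mul_wordLength hM
    (hB ▸ zpow_mem (Subgroup.mem_zpowers (nilK e)) (e * n * n))
  have ht' : e * n * n = t := by
    simpa [toModel_nilK_zpow] using congrArg (fun g => (toModel e g).z) ht
  calc n ^ 2 ≤ e.natAbs * n * n := by nlinarith [Int.natAbs_pos.2 he]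
    _ = t.natAbs := by rw [← ht', Int.natAbs_mul, Int.natAbs_mul, Int.natAbs_natCast]
    _ ≤ _ := htM

theorem exists_wordLength_nilK_zpow_le (hS : Subgroup.closure (S : Set (NilGroup e)) = ⊤) :
    ∃ D : ℕ, ∀ n : ℕ, wordLength (S : Set (NilGroup e)) (nilK e ^ (e * n * n)) ≤ D * n := by
  have hmem (g : NilGroup e) : g ∈ Subgroup.closure (S : Set (NilGroup e)) :=
    hS ▸ Subgroup.mem_top g
  refine ⟨2 * (wordLength (S : Set (NilGroup e)) (nilA e) +
    wordLength (S : Set (NilGroup e)) (nilB e)), fun n => ?_⟩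
  rw [← commutatorElement_nilA_pow_nilB_pow]
  refine (wordLength_commutatorElement_le (hmem _) (hmem _)).trans ?_
  have := wordLength_pow_le (hmem (nilA e)) n
  have := wordLength_pow_le (hmem (nilB e)) n
  nlinarith

end NilGroup

/-- For `e ≠ 0`, the central cyclic subgroup `⟨k⟩` is quadratically
distorted in `N_e = ⟨a, b, k | [a,k] = 1, [b,k] = 1, [a,b] = kᵉ⟩`: its distortion
function is equivalent to `n ↦ n²`. -/
theorem center_quadratically_distorted_nilGroup (e : ℤ) (he : e ≠ 0)
    (S : Finset (NilGroup e)) (hS : Subgroup.closure (S : Set (NilGroup e)) = ⊤)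
    (B : Finset (NilGroup e))
    (hB : Subgroup.closure (B : Set (NilGroup e)) = Subgroup.zpowers (nilK e)) :
    EquivN (distortion (S : Set (NilGroup e)) (B : Set (NilGroup e))) (fun n => n ^ 2) := by
  obtain ⟨C, hC⟩ := NilGroup.exists_wordLength_le_mul_sq hS hB
  have hbound (n : ℕ) : ∀ g ∈ Subgroup.closure (B : Set (NilGroup e)),
      wordLength (S : Set (NilGroup e)) g ≤ n → wordLength (B : Set (NilGroup e)) g ≤ C * n ^ 2 :=
    fun g hg hgn => (hC g hg).trans (by gcongr)
  obtain ⟨M, hM⟩ := NilGroup.exists_sq_le_mul_wordLength_nilK_zpow he hB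
  obtain ⟨D, hD⟩ := NilGroup.exists_wordLength_nilK_zpow_le hS
  refine ⟨DominatedN.of_le (A := C) (B := 1) (C := 1) one_pos one_pos fun n => ?_,
    DominatedN.of_le (A := M) (B := D + 1) (C := 1) D.succ_pos one_pos fun n => ?_⟩
  · exact (distortion_le (hbound n)).trans (by gcongr; omega)
  · have hmem : nilK e ^ (e * n * n) ∈ Subgroup.closure (B : Set (NilGroup e)) :=
      hB ▸ zpow_mem (Subgroup.mem_zpowers _) _
    refine (hM n).trans (Nat.mul_le_mul_left M (le_distortion (hbound _) hmem ?_))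
    linarith [hD n]
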